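/- (Upper bound via unconstrained bandit.) Suppose each arm's unavailable-arm belief update is γ_n (i.e., the same natural Markov update as the not-play update). Let U^λ_n be the unique bounded fixed point of the unconstrained single-arm Lagrangian equation U(π) = max{ ρ_n(π) − λ + β[ρ_n(π)U(Γ1^n(π)) + (1−ρ_n(π))U(Γ0^n(π))], βU(γ_n(π)) }. Then for every π ∈ [0,1]^N and y ∈ {0,1}^N, J^λ(π, y) ≤ Mλ/(1−β) + Σ_{n=1}^N U^λ_n(π_n). -/

import Mathlib

open Set

noncomputable section

/-- Expected immediate reward (success probability) at belief `π`. -/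
def rhoB (ρ0 ρ1 π : ℝ) : ℝ := π * ρ0 + (1 - π) * ρ1

/-- Belief update after a play resulting in success. -/
def Gam1 (p00 p10 ρ0 ρ1 π : ℝ) : ℝ :=
  (π * ρ0 * p00 + (1 - π) * ρ1 * p10) / (π * ρ0 + (1 - π) * ρ1)

/-- Belief update after a play resulting in failure. -/
def Gam0 (p00 p10 ρ0 ρ1 π : ℝ) : ℝ :=
  (π * (1 - ρ0) * p00 + (1 - π) * (1 - ρ1) * p10) /
    (π * (1 - ρ0) + (1 - π) * (1 - ρ1))

/-- Belief update without observation (natural Markov evolution). -/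
def gam (p00 p10 π : ℝ) : ℝ := π * p00 + (1 - π) * p10

/-- Joint Lagrangian-relaxed Bellman operator for the `N`-arm constrained
restless bandit with stochastic availability: the maximum is over feasible
actions (`a n = false` whenever `y n = false`); the play constraint `‖a‖₁ = M`
is relaxed with multiplier `lam`, and the next-state expectation is over
independent observation and availability outcomes of the arms. -/
def TJoint (N : ℕ) (p00 p10 ρ0 ρ1 θ11 θ01 θ00 : Fin N → ℝ) (β lam : ℝ) (M : ℕ)
    (J : (Fin N → ℝ) → (Fin N → Bool) → ℝ)
    (π : Fin N → ℝ) (y : Fin N → Bool) : ℝ :=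
  (Finset.univ.filter (fun a : Fin N → Bool => ∀ n, y n = false → a n = false)).sup'
    (by exact ⟨fun _ => false, by simp⟩)
    (fun a =>
      (∑ n, if a n then rhoB (ρ0 n) (ρ1 n) (π n) else 0)
        + lam * ((M : ℝ) - ∑ n, (if a n then (1:ℝ) else 0))
        + β * ∑ o : Fin N → Bool, ∑ y' : Fin N → Bool,
            (∏ n,
              (if a n then
                  (if o n then rhoB (ρ0 n) (ρ1 n) (π n)
                   else 1 - rhoB (ρ0 n) (ρ1 n) (π n))
                else (if o n then (1:ℝ) else 0))
              *
              (if y' n then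
                  (if a n then θ11 n else if y n then θ01 n else θ00 n)
                else 1 - (if a n then θ11 n else if y n then θ01 n else θ00 n)))
            * J (fun n =>
                  if a n then
                    (if o n then Gam1 (p00 n) (p10 n) (ρ0 n) (ρ1 n) (π n)
                     else Gam0 (p00 n) (p10 n) (ρ0 n) (ρ1 n) (π n))
                  else gam (p00 n) (p10 n) (π n)) y')

/-- Bounded on the joint belief space `[0,1]^N × {0,1}^N`. -/
def BddOnN (N : ℕ) (J : (Fin N → ℝ) → (Fin N → Bool) → ℝ) : Prop :=
  ∃ C : ℝ, ∀ π : Fin N → ℝ, (∀ n, π n ∈ Icc (0:ℝ) 1) → ∀ y : Fin N → Bool, |J π y| ≤ C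

/-- Unconstrained single-arm Lagrangian Bellman operator. -/
def TUarm (p00 p10 ρ0 ρ1 β lam : ℝ) (U : ℝ → ℝ) (π : ℝ) : ℝ :=
  max
    (rhoB ρ0 ρ1 π - lam
      + β * (rhoB ρ0 ρ1 π * U (Gam1 p00 p10 ρ0 ρ1 π)
          + (1 - rhoB ρ0 ρ1 π) * U (Gam0 p00 p10 ρ0 ρ1 π)))
    (β * U (gam p00 p10 π))

open Filter Topology

/-!
After relaxation the play constraint only costs a constant `λ M` per step plus a charge `λ` per
play, so the arms no longer interact: each arm is played or rested at will, and an unavailable arm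
is merely forced to rest, which moves its belief by `γ_n` just as a voluntary rest does. Hence
`V(π) = Mλ/(1-β) + Σ_n U^λ_n(π_n)` is a supersolution of the joint equation: summing the
single-arm fixed-point inequalities and averaging over the independent outcomes, the joint
operator maps any `J ≤ V + c` below `V + βc`. As `J^λ - V` is bounded above and `J^λ` is a fixed
point, iterating gives `J^λ ≤ V + β^k C` for every `k`.
-/

lemma le_of_le_add_imp_le_add_mul {α : Type*} {S : Set α} {f g : α → ℝ} {β : ℝ}
    (hβ0 : 0 ≤ β) (hβ1 : β < 1) (hbdd : ∃ C, ∀ x ∈ S, f x ≤ g x + C)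
    (hstep : ∀ c, (∀ x ∈ S, f x ≤ g x + c) → ∀ x ∈ S, f x ≤ g x + β * c) :
    ∀ x ∈ S, f x ≤ g x := by
  obtain ⟨C, hC⟩ := hbdd
  have hiter : ∀ k : ℕ, ∀ x ∈ S, f x ≤ g x + β ^ k * C := by
    intro k
    induction k with
    | zero => simpa using hC
    | succ k ih => simpa only [pow_succ', mul_assoc] using hstep _ ih
  intro x hx
  have hlim : Tendsto (fun k : ℕ => g x + β ^ k * C) atTop (𝓝 (g x + 0 * C)) :=
    ((tendsto_pow_atTop_nhds_zero_of_lt_one hβ0 hβ1).mul_const C).const_add _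
  simpa using ge_of_tendsto' hlim fun k => hiter k x hx

section ProductWeights

variable {ι κ : Type*} [Fintype ι] [DecidableEq ι] [Fintype κ] {w : ι → κ → ℝ}

lemma sum_prod_eq_one (hw : ∀ i, ∑ b, w i b = 1) : ∑ x : ι → κ, ∏ i, w i (x i) = 1 := by
  simp [← Fintype.prod_sum, hw]

lemma sum_prod_mul_apply (hw : ∀ i, ∑ b, w i b = 1) (k : ι) (g : κ → ℝ) :
    ∑ x : ι → κ, (∏ i, w i (x i)) * g (x k) = ∑ b, w k b * g b := by
  have hsplit : ∀ x : ι → κ,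
      (∏ i, w i (x i)) * g (x k) = ∏ i, w i (x i) * (if i = k then g (x i) else 1) := by
    intro x
    rw [Finset.prod_mul_distrib, Finset.prod_ite_eq' Finset.univ k]
    simp
  rw [Finset.sum_congr rfl fun x _ => hsplit x,
    ← Fintype.prod_sum fun i b => w i b * if i = k then g b else 1,
    Finset.prod_eq_single k (fun i _ hik => by simp [hik, hw i]) (by simp)]
  simp

lemma sum_prod_mul_add_sum_apply (hw : ∀ i, ∑ b, w i b = 1) (K : ℝ)
    (g : ι → κ → ℝ) :
    ∑ x : ι → κ, (∏ i, w i (x i)) * (K + ∑ k, g k (x k)) = K + ∑ k, ∑ b, w k b * g k b := by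
  simp_rw [mul_add, Finset.mul_sum, Finset.sum_add_distrib, ← Finset.sum_mul,
    sum_prod_eq_one hw, one_mul]
  rw [Finset.sum_comm]
  simp_rw [sum_prod_mul_apply hw]

end ProductWeights

lemma div_add_mem_Icc {u v p q : ℝ} (hu : 0 ≤ u) (hv : 0 ≤ v) (hp : p ∈ Icc (0:ℝ) 1)
    (hq : q ∈ Icc (0:ℝ) 1) : (u * p + v * q) / (u + v) ∈ Icc (0:ℝ) 1 := by
  rcases (add_nonneg hu hv).eq_or_lt with huv | huv
  · simp [← huv]
  · refine ⟨div_nonneg (by nlinarith [hp.1, hq.1]) huv.le, ?_⟩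
    rw [div_le_one huv]
    nlinarith [mul_le_mul_of_nonneg_left hp.2 hu, mul_le_mul_of_nonneg_left hq.2 hv]

/-- Probability of the observation `o` (`true` = success) under action `a`. A resting arm
observes nothing; as in `TJoint`, this is encoded as `o = true` with probability one. -/
def armWeight (ρ0 ρ1 π : ℝ) (a o : Bool) : ℝ :=
  if a then (if o then rhoB ρ0 ρ1 π else 1 - rhoB ρ0 ρ1 π) else (if o then 1 else 0)

def armNext (p00 p10 ρ0 ρ1 π : ℝ) (a o : Bool) : ℝ :=
  if a then (if o then Gam1 p00 p10 ρ0 ρ1 π else Gam0 p00 p10 ρ0 ρ1 π) else gam p00 p10 π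

def availProb (θ11 θ01 θ00 : ℝ) (a y : Bool) : ℝ :=
  if a then θ11 else if y then θ01 else θ00

def bernoulliWeight (q : ℝ) (b : Bool) : ℝ :=
  if b then q else 1 - q

section Arm

variable {p00 p10 ρ0 ρ1 π : ℝ}

lemma rhoB_mem_Icc (h0 : ρ0 ∈ Icc (0:ℝ) 1) (h1 : ρ1 ∈ Icc (0:ℝ) 1) (hπ : π ∈ Icc (0:ℝ) 1) :
    rhoB ρ0 ρ1 π ∈ Icc (0:ℝ) 1 := by
  simpa [rhoB] using convex_Icc (0:ℝ) 1 h0 h1 hπ.1 (sub_nonneg.2 hπ.2) (by ring)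

lemma gam_mem_Icc (hp00 : p00 ∈ Icc (0:ℝ) 1) (hp10 : p10 ∈ Icc (0:ℝ) 1)
    (hπ : π ∈ Icc (0:ℝ) 1) : gam p00 p10 π ∈ Icc (0:ℝ) 1 :=
  rhoB_mem_Icc hp00 hp10 hπ

lemma Gam1_mem_Icc (hp00 : p00 ∈ Icc (0:ℝ) 1) (hp10 : p10 ∈ Icc (0:ℝ) 1)
    (h0 : 0 ≤ ρ0) (h1 : 0 ≤ ρ1) (hπ : π ∈ Icc (0:ℝ) 1) : Gam1 p00 p10 ρ0 ρ1 π ∈ Icc (0:ℝ) 1 :=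
  div_add_mem_Icc (mul_nonneg hπ.1 h0) (mul_nonneg (sub_nonneg.2 hπ.2) h1) hp00 hp10

lemma Gam0_mem_Icc (hp00 : p00 ∈ Icc (0:ℝ) 1) (hp10 : p10 ∈ Icc (0:ℝ) 1)
    (h0 : ρ0 ≤ 1) (h1 : ρ1 ≤ 1) (hπ : π ∈ Icc (0:ℝ) 1) : Gam0 p00 p10 ρ0 ρ1 π ∈ Icc (0:ℝ) 1 :=
  div_add_mem_Icc (mul_nonneg hπ.1 (sub_nonneg.2 h0))
    (mul_nonneg (sub_nonneg.2 hπ.2) (sub_nonneg.2 h1)) hp00 hp10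

lemma sum_armWeight (a : Bool) : ∑ o, armWeight ρ0 ρ1 π a o = 1 := by
  cases a <;> simp [armWeight]

lemma armWeight_nonneg (h0 : ρ0 ∈ Icc (0:ℝ) 1) (h1 : ρ1 ∈ Icc (0:ℝ) 1)
    (hπ : π ∈ Icc (0:ℝ) 1) (a o : Bool) : 0 ≤ armWeight ρ0 ρ1 π a o := by
  have hρ := rhoB_mem_Icc h0 h1 hπ
  cases a <;> cases o <;> simp [armWeight, hρ.1, hρ.2]

lemma armNext_mem_Icc (hp00 : p00 ∈ Icc (0:ℝ) 1) (hp10 : p10 ∈ Icc (0:ℝ) 1)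
    (h0 : ρ0 ∈ Icc (0:ℝ) 1) (h1 : ρ1 ∈ Icc (0:ℝ) 1) (hπ : π ∈ Icc (0:ℝ) 1) (a o : Bool) :
    armNext p00 p10 ρ0 ρ1 π a o ∈ Icc (0:ℝ) 1 := by
  cases a <;> cases o <;> simp only [armNext, Bool.false_eq_true, if_true, if_false]
  · exact gam_mem_Icc hp00 hp10 hπ
  · exact gam_mem_Icc hp00 hp10 hπ
  · exact Gam0_mem_Icc hp00 hp10 h0.2 h1.2 hπ
  · exact Gam1_mem_Icc hp00 hp10 h0.1 h1.1 hπ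

lemma armActionValue_le {β lam : ℝ} {U : ℝ → ℝ}
    (hU : TUarm p00 p10 ρ0 ρ1 β lam U π = U π) (a : Bool) :
    (if a then rhoB ρ0 ρ1 π else 0) - lam * (if a then 1 else 0)
      + β * ∑ o, armWeight ρ0 ρ1 π a o * U (armNext p00 p10 ρ0 ρ1 π a o) ≤ U π := by
  rw [← hU, TUarm]
  cases a
  · simp [armWeight, armNext]
  · refine le_of_eq_of_le ?_ (le_max_left _ _)
    simp [armWeight, armNext]

end Arm

lemma sum_bernoulliWeight (q : ℝ) : ∑ b, bernoulliWeight q b = 1 := by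
  simp [bernoulliWeight]

lemma bernoulliWeight_nonneg {q : ℝ} (hq : q ∈ Icc (0:ℝ) 1) (b : Bool) :
    0 ≤ bernoulliWeight q b := by
  cases b <;> simp [bernoulliWeight, hq.1, hq.2]

lemma availProb_mem_Icc {θ11 θ01 θ00 : ℝ} (h11 : θ11 ∈ Icc (0:ℝ) 1) (h01 : θ01 ∈ Icc (0:ℝ) 1)
    (h00 : θ00 ∈ Icc (0:ℝ) 1) (a y : Bool) : availProb θ11 θ01 θ00 a y ∈ Icc (0:ℝ) 1 := by
  cases a <;> cases y <;> simpa [availProb]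

section Joint

variable {N : ℕ} {p00 p10 ρ0 ρ1 θ11 θ01 θ00 : Fin N → ℝ} {β lam c : ℝ} {M : ℕ}
  {Un : Fin N → ℝ → ℝ} {J : (Fin N → ℝ) → (Fin N → Bool) → ℝ}

lemma jointActionValue_le (hp00 : ∀ n, p00 n ∈ Icc (0:ℝ) 1) (hp10 : ∀ n, p10 n ∈ Icc (0:ℝ) 1)
    (hρ0 : ∀ n, ρ0 n ∈ Icc (0:ℝ) 1) (hρ1 : ∀ n, ρ1 n ∈ Icc (0:ℝ) 1)
    (hθ11 : ∀ n, θ11 n ∈ Icc (0:ℝ) 1) (hθ01 : ∀ n, θ01 n ∈ Icc (0:ℝ) 1)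
    (hθ00 : ∀ n, θ00 n ∈ Icc (0:ℝ) 1) (hβ0 : 0 ≤ β) (hβ1 : β ≠ 1)
    (hUn : ∀ n, ∀ x ∈ Icc (0:ℝ) 1, TUarm (p00 n) (p10 n) (ρ0 n) (ρ1 n) β lam (Un n) x = Un n x)
    (hJ : ∀ π : Fin N → ℝ, (∀ n, π n ∈ Icc (0:ℝ) 1) → ∀ y : Fin N → Bool,
      J π y ≤ (M : ℝ) * lam / (1 - β) + ∑ n, Un n (π n) + c)
    {π : Fin N → ℝ} (hπ : ∀ n, π n ∈ Icc (0:ℝ) 1) (y a : Fin N → Bool) :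
    (∑ n, if a n then rhoB (ρ0 n) (ρ1 n) (π n) else 0)
        + lam * ((M : ℝ) - ∑ n, (if a n then (1:ℝ) else 0))
        + β * ∑ o : Fin N → Bool, ∑ y' : Fin N → Bool,
            (∏ n, armWeight (ρ0 n) (ρ1 n) (π n) (a n) (o n)
              * bernoulliWeight (availProb (θ11 n) (θ01 n) (θ00 n) (a n) (y n)) (y' n))
            * J (fun n => armNext (p00 n) (p10 n) (ρ0 n) (ρ1 n) (π n) (a n) (o n)) y'
      ≤ (M : ℝ) * lam / (1 - β) + ∑ n, Un n (π n) + β * c := by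
  set K := (M : ℝ) * lam / (1 - β) + c
  set wo : Fin N → Bool → ℝ := fun n o => armWeight (ρ0 n) (ρ1 n) (π n) (a n) o
  set wy : Fin N → Bool → ℝ := fun n y' =>
    bernoulliWeight (availProb (θ11 n) (θ01 n) (θ00 n) (a n) (y n)) y'
  set next : Fin N → Bool → ℝ := fun n o => armNext (p00 n) (p10 n) (ρ0 n) (ρ1 n) (π n) (a n) o
  have hwo : ∀ n, ∑ o, wo n o = 1 := fun n => sum_armWeight (a n)
  have hwy : ∀ n, ∑ y', wy n y' = 1 := fun n => sum_bernoulliWeight _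
  have hexpect : ∑ o : Fin N → Bool, ∑ y' : Fin N → Bool,
        (∏ n, wo n (o n) * wy n (y' n)) * J (fun n => next n (o n)) y'
      ≤ K + ∑ n, ∑ o, wo n o * Un n (next n o) := calc
    _ ≤ ∑ o : Fin N → Bool, ∑ y' : Fin N → Bool,
          (∏ n, wo n (o n) * wy n (y' n)) * (K + ∑ n, Un n (next n (o n))) := by
      gcongr with o _ y' _
      · exact Finset.prod_nonneg fun n _ => mul_nonneg
          (armWeight_nonneg (hρ0 n) (hρ1 n) (hπ n) _ _)
          (bernoulliWeight_nonneg (availProb_mem_Icc (hθ11 n) (hθ01 n) (hθ00 n) _ _) _)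
      · simpa [K, add_right_comm] using
          hJ _ (fun n => armNext_mem_Icc (hp00 n) (hp10 n) (hρ0 n) (hρ1 n) (hπ n) _ _) y'
    -- the bound no longer depends on the next availability `y'`, which therefore averages out
    _ = ∑ o : Fin N → Bool, (∏ n, wo n (o n)) * (K + ∑ n, Un n (next n (o n))) := by
      simp_rw [Finset.prod_mul_distrib, mul_right_comm _ (∏ n, wy n _), ← Finset.mul_sum,
        sum_prod_eq_one hwy, mul_one]
    _ = K + ∑ n, ∑ o, wo n o * Un n (next n o) :=
      sum_prod_mul_add_sum_apply hwo K fun n o => Un n (next n o)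
  have harms : ∑ n, ((if a n then rhoB (ρ0 n) (ρ1 n) (π n) else 0)
        - lam * (if a n then 1 else 0) + β * ∑ o, wo n o * Un n (next n o))
      ≤ ∑ n, Un n (π n) :=
    Finset.sum_le_sum fun n _ => armActionValue_le (hUn n _ (hπ n)) (a n)
  rw [Finset.sum_add_distrib, Finset.sum_sub_distrib, ← Finset.mul_sum, ← Finset.mul_sum] at harms
  have hconst : lam * M + β * (M * lam / (1 - β)) = M * lam / (1 - β) := by
    field_simp [sub_ne_zero.2 hβ1.symm]
    ring
  linarith [mul_le_mul_of_nonneg_left hexpect hβ0]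

lemma TJoint_le (hp00 : ∀ n, p00 n ∈ Icc (0:ℝ) 1) (hp10 : ∀ n, p10 n ∈ Icc (0:ℝ) 1)
    (hρ0 : ∀ n, ρ0 n ∈ Icc (0:ℝ) 1) (hρ1 : ∀ n, ρ1 n ∈ Icc (0:ℝ) 1)
    (hθ11 : ∀ n, θ11 n ∈ Icc (0:ℝ) 1) (hθ01 : ∀ n, θ01 n ∈ Icc (0:ℝ) 1)
    (hθ00 : ∀ n, θ00 n ∈ Icc (0:ℝ) 1) (hβ0 : 0 ≤ β) (hβ1 : β ≠ 1)
    (hUn : ∀ n, ∀ x ∈ Icc (0:ℝ) 1, TUarm (p00 n) (p10 n) (ρ0 n) (ρ1 n) β lam (Un n) x = Un n x)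
    (hJ : ∀ π : Fin N → ℝ, (∀ n, π n ∈ Icc (0:ℝ) 1) → ∀ y : Fin N → Bool,
      J π y ≤ (M : ℝ) * lam / (1 - β) + ∑ n, Un n (π n) + c)
    {π : Fin N → ℝ} (hπ : ∀ n, π n ∈ Icc (0:ℝ) 1) (y : Fin N → Bool) :
    TJoint N p00 p10 ρ0 ρ1 θ11 θ01 θ00 β lam M J π y
      ≤ (M : ℝ) * lam / (1 - β) + ∑ n, Un n (π n) + β * c :=
  Finset.sup'_le _ _ fun a _ => jointActionValue_le hp00 hp10 hρ0 hρ1 hθ11 hθ01 hθ00 hβ0 hβ1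
    hUn hJ hπ y a

lemma exists_le_add_sum_of_bddOnN (hJ : BddOnN N J)
    (hUn : ∀ n, ∃ C : ℝ, ∀ x ∈ Icc (0:ℝ) 1, |Un n x| ≤ C) (K : ℝ) :
    ∃ C : ℝ, ∀ π : Fin N → ℝ, (∀ n, π n ∈ Icc (0:ℝ) 1) → ∀ y : Fin N → Bool,
      J π y ≤ K + ∑ n, Un n (π n) + C := by
  obtain ⟨CJ, hCJ⟩ := hJ
  choose CU hCU using hUn
  refine ⟨CJ - K + ∑ n, CU n, fun π hπ y => ?_⟩
  have hJle := (abs_le.1 (hCJ π hπ y)).2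
  have hUge : ∑ n, -CU n ≤ ∑ n, Un n (π n) :=
    Finset.sum_le_sum fun n _ => (abs_le.1 (hCU n _ (hπ n))).1
  rw [Finset.sum_neg_distrib] at hUge
  linarith

end Joint

theorem stmt4_general (N : ℕ) (p00 p10 ρ0 ρ1 θ11 θ01 θ00 : Fin N → ℝ) (β lam : ℝ) (M : ℕ)
    (hp00 : ∀ n, p00 n ∈ Icc (0:ℝ) 1) (hp10 : ∀ n, p10 n ∈ Icc (0:ℝ) 1)
    (hρ0 : ∀ n, 0 < ρ0 n) (hρ01 : ∀ n, ρ0 n < ρ1 n) (hρ1 : ∀ n, ρ1 n < 1)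
    (hθ11 : ∀ n, θ11 n ∈ Icc (0:ℝ) 1) (hθ01 : ∀ n, θ01 n ∈ Icc (0:ℝ) 1)
    (hθ00 : ∀ n, θ00 n ∈ Icc (0:ℝ) 1)
    (hβ : β ∈ Ioo (0:ℝ) 1)
    -- `Un n` is the unique bounded fixed point of the unconstrained single-arm equation
    (Un : Fin N → ℝ → ℝ)
    (hUnb : ∀ n, ∃ C : ℝ, ∀ π ∈ Icc (0:ℝ) 1, |Un n π| ≤ C)
    (hUnfix : ∀ n, ∀ π ∈ Icc (0:ℝ) 1,
      TUarm (p00 n) (p10 n) (ρ0 n) (ρ1 n) β lam (Un n) π = Un n π)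
    -- `J` is the unique bounded fixed point of the joint relaxed Bellman equation
    (J : (Fin N → ℝ) → (Fin N → Bool) → ℝ)
    (hJb : BddOnN N J)
    (hJfix : ∀ π : Fin N → ℝ, (∀ n, π n ∈ Icc (0:ℝ) 1) → ∀ y : Fin N → Bool,
      TJoint N p00 p10 ρ0 ρ1 θ11 θ01 θ00 β lam M J π y = J π y) :
    ∀ π : Fin N → ℝ, (∀ n, π n ∈ Icc (0:ℝ) 1) → ∀ y : Fin N → Bool,
      J π y ≤ (M : ℝ) * lam / (1 - β) + ∑ n, Un n (π n) := by
  obtain ⟨hβ0, hβ1⟩ := hβ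
  have hρ0' : ∀ n, ρ0 n ∈ Icc (0:ℝ) 1 := fun n => ⟨(hρ0 n).le, ((hρ01 n).trans (hρ1 n)).le⟩
  have hρ1' : ∀ n, ρ1 n ∈ Icc (0:ℝ) 1 := fun n => ⟨((hρ0 n).trans (hρ01 n)).le, (hρ1 n).le⟩
  let S : Set ((Fin N → ℝ) × (Fin N → Bool)) := {q | ∀ n, q.1 n ∈ Icc (0:ℝ) 1}
  have hgap := le_of_le_add_imp_le_add_mul (S := S) (f := fun q => J q.1 q.2)
    (g := fun q => (M : ℝ) * lam / (1 - β) + ∑ n, Un n (q.1 n)) hβ0.le hβ1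
    (by
      obtain ⟨C, hC⟩ := exists_le_add_sum_of_bddOnN hJb hUnb ((M : ℝ) * lam / (1 - β))
      exact ⟨C, fun q hq => hC q.1 hq q.2⟩)
    (fun c hc q hq => by
      rw [← hJfix q.1 hq q.2]
      exact TJoint_le hp00 hp10 hρ0' hρ1' hθ11 hθ01 hθ00 hβ0.le hβ1.ne
        hUnfix (fun π hπ y => hc (π, y) hπ) hq q.2)
  exact fun π hπ y => hgap (π, y) hπ

/-- **Upper bound via unconstrained bandit.** With the
unavailable-arm belief update equal to `γ_n`, the joint Lagrangian value is
bounded by `Mλ/(1−β) + Σ_n U^λ_n(π_n)`, where `U^λ_n` is the unique bounded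
fixed point of the unconstrained single-arm Lagrangian equation. -/
theorem stmt4 (N : ℕ) (p00 p10 ρ0 ρ1 θ11 θ01 θ00 : Fin N → ℝ) (β lam : ℝ) (M : ℕ)
    (hp00 : ∀ n, p00 n ∈ Icc (0:ℝ) 1) (hp10 : ∀ n, p10 n ∈ Icc (0:ℝ) 1)
    (hρ0 : ∀ n, 0 < ρ0 n) (hρ01 : ∀ n, ρ0 n < ρ1 n) (hρ1 : ∀ n, ρ1 n < 1)
    (hθ11 : ∀ n, θ11 n ∈ Icc (0:ℝ) 1) (hθ01 : ∀ n, θ01 n ∈ Icc (0:ℝ) 1)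
    (hθ00 : ∀ n, θ00 n ∈ Icc (0:ℝ) 1)
    (hβ : β ∈ Ioo (0:ℝ) 1) (hlam : 0 < lam)
    -- `Un n` is the unique bounded fixed point of the unconstrained single-arm equation
    (Un : Fin N → ℝ → ℝ)
    (hUnb : ∀ n, ∃ C : ℝ, ∀ π ∈ Icc (0:ℝ) 1, |Un n π| ≤ C)
    (hUnfix : ∀ n, ∀ π ∈ Icc (0:ℝ) 1,
      TUarm (p00 n) (p10 n) (ρ0 n) (ρ1 n) β lam (Un n) π = Un n π)
    -- `J` is the unique bounded fixed point of the joint relaxed Bellman equation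
    (J : (Fin N → ℝ) → (Fin N → Bool) → ℝ)
    (hJb : BddOnN N J)
    (hJfix : ∀ π : Fin N → ℝ, (∀ n, π n ∈ Icc (0:ℝ) 1) → ∀ y : Fin N → Bool,
      TJoint N p00 p10 ρ0 ρ1 θ11 θ01 θ00 β lam M J π y = J π y) :
    ∀ π : Fin N → ℝ, (∀ n, π n ∈ Icc (0:ℝ) 1) → ∀ y : Fin N → Bool,
      J π y ≤ (M : ℝ) * lam / (1 - β) + ∑ n, Un n (π n) :=
  stmt4_general N p00 p10 ρ0 ρ1 θ11 θ01 θ00 β lam M hp00 hp10 hρ0 hρ01 hρ1 hθ11 hθ01 hθ00 hβ Un hUnb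
    hUnfix J hJb hJfix
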